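/- arXiv:1108.3261 — 2 statements merged into one kernel-verified Lean document; each statement's English description precedes it below -/
import Mathlib

section
/- Every nonzero ideal of K[x₁,…,xₙ] possesses a finite Janet basis with respect to any monomial ordering ≺. -/
open scoped MonomialOrder

/-- The variable `i` is Janet-multiplicative for the monomial `u` with respect to the
finite set of monomials `U` (monomials are identified with exponent vectors). -/
def JanetMult {n : ℕ} (U : Finset (Fin n →₀ ℕ)) (u : Fin n →₀ ℕ) (i : Fin n) : Prop :=
  ∀ v ∈ U, (∀ j, j < i → v j = u j) → v i ≤ u i

/-- The Janet cone `J(u,U)`: all monomials `u·m` where `m` is a product of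
Janet-multiplicative variables of `u` w.r.t. `U`. -/
def JanetCone {n : ℕ} (U : Finset (Fin n →₀ ℕ)) (u : Fin n →₀ ℕ) : Set (Fin n →₀ ℕ) :=
  { w | (∀ i, u i ≤ w i) ∧ ∀ i, u i < w i → JanetMult U u i }

/-- The leading monomial (exponent vector) of a polynomial w.r.t. a monomial order. -/
noncomputable def LM {n : ℕ} {K : Type*} [Field K] (m : MonomialOrder (Fin n))
    (f : MvPolynomial (Fin n) K) : Fin n →₀ ℕ :=
  m.toSyn.symm (f.support.sup fun c => m.toSyn c)

/-- `f` has a Janet standard representation w.r.t. the finite polynomial set `G`: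
`f = Σ_{g ∈ G} h_g · g` where every monomial of each nonzero `h_g` is a product of
Janet-multiplicative variables of `LM(g)` w.r.t. `LM(G)`, and `LM(h_g·g) ≼ LM(f)`. -/
def JanetSR {n : ℕ} {K : Type*} [Field K] (m : MonomialOrder (Fin n))
    (G : Finset (MvPolynomial (Fin n) K)) (f : MvPolynomial (Fin n) K) : Prop :=
  ∃ h : MvPolynomial (Fin n) K → MvPolynomial (Fin n) K,
    f = ∑ g ∈ G, h g * g ∧
    ∀ g ∈ G, h g ≠ 0 →
      (∀ c ∈ (h g).support, ∀ i, c i ≠ 0 → JanetMult (G.image (LM m)) (LM m g) i) ∧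
      (LM m (h g * g) ≼[m] LM m f)

/-- `G` is a Janet basis of the ideal `I` w.r.t. the monomial order `m`. -/
def JanetBasis {n : ℕ} {K : Type*} [Field K] (m : MonomialOrder (Fin n))
    (I : Ideal (MvPolynomial (Fin n) K)) (G : Finset (MvPolynomial (Fin n) K)) : Prop :=
  (∀ g ∈ G, g ≠ 0) ∧ (↑G : Set (MvPolynomial (Fin n) K)) ⊆ I ∧
    ∀ f ∈ I, f ≠ 0 → ∃ g ∈ G, LM m f ∈ JanetCone (G.image (LM m)) (LM m g)

/-!
Let `L` be the set of leading monomials of the nonzero elements of `I`; it is an upper set,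
and by Dickson's lemma it has finitely many minimal elements, with least common multiple `D`.
Take `G` to contain, for each monomial of `L` dividing `D`, one element of `I` with that
leading monomial. For `f ∈ I \ {0}` the monomial `LM f ⊓ D` (the gcd of `LM f` and `D`)
lies in `L`, since it is still divisible by a minimal element below `LM f`. Its Janet cone
contains `LM f`: every variable in which `LM f` exceeds it already has the maximal degree
`D i` that any monomial of `LM(G)` can have, so it is Janet-multiplicative.
-/

theorem exists_finset_forall_exists_le {α : Type*} [PartialOrder α] [WellQuasiOrderedLE α]
    (L : Set α) : ∃ B : Finset α, ↑B ⊆ L ∧ ∀ l ∈ L, ∃ b ∈ B, b ≤ l := by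
  have hfin : {x | Minimal (· ∈ L) x}.Finite :=
    WellQuasiOrderedLE.finite_of_isAntichain (setOfPred_minimal_antichain _)
  refine ⟨hfin.toFinset, fun b hb => (hfin.mem_toFinset.1 hb).prop, fun l hl => ?_⟩
  obtain ⟨b, hbl, hb⟩ := exists_minimal_le_of_wellFoundedLT (· ∈ L) l hl
  exact ⟨b, hfin.mem_toFinset.2 hb, hbl⟩

theorem inf_mem_janetCone {n : ℕ} {U : Finset (Fin n →₀ ℕ)} {D : Fin n →₀ ℕ}
    (hU : ∀ v ∈ U, v ≤ D) (w : Fin n →₀ ℕ) : w ∈ JanetCone U (w ⊓ D) := by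
  refine ⟨fun i => inf_le_left (a := w) (b := D) i, fun i hi v hv _ => ?_⟩
  have hD : (w ⊓ D) i = D i := by
    simp only [Finsupp.inf_apply] at hi ⊢
    omega
  exact hD ▸ hU v hv i

section LeadingMonomials

variable {n : ℕ} {K : Type*} [Field K] (m : MonomialOrder (Fin n))

theorem LM_eq_degree (f : MvPolynomial (Fin n) K) : LM m f = m.degree f := rfl

def leadingMonomials (I : Ideal (MvPolynomial (Fin n) K)) : Set (Fin n →₀ ℕ) :=
  {u | ∃ f ∈ I, f ≠ 0 ∧ LM m f = u}

theorem isUpperSet_leadingMonomials (I : Ideal (MvPolynomial (Fin n) K)) :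
    IsUpperSet (leadingMonomials m I) := by
  classical
  rintro u v huv ⟨f, hfI, hf0, rfl⟩
  have hmon : MvPolynomial.monomial (v - LM m f) (1 : K) ≠ 0 := by simp
  refine ⟨_, I.mul_mem_left _ hfI, mul_ne_zero hmon hf0, ?_⟩
  rw [LM_eq_degree, m.degree_mul hmon hf0, m.degree_monomial, if_neg one_ne_zero,
    ← LM_eq_degree, tsub_add_cancel_of_le huv]

theorem exists_finset_image_LM_eq (I : Ideal (MvPolynomial (Fin n) K))
    (U : Finset (Fin n →₀ ℕ)) (hU : ↑U ⊆ leadingMonomials m I) :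
    ∃ G : Finset (MvPolynomial (Fin n) K),
      (∀ g ∈ G, g ≠ 0) ∧ ↑G ⊆ (I : Set (MvPolynomial (Fin n) K)) ∧ G.image (LM m) = U := by
  classical
  choose! p hpI hp0 hpLM using hU
  refine ⟨U.image p, ?_, ?_, ?_⟩
  · simpa using hp0
  · simpa [Set.subset_def] using hpI
  · rw [Finset.image_image]
    exact (Finset.image_congr hpLM).trans Finset.image_id

end LeadingMonomials

theorem exists_janetBasis_general {n : ℕ} {K : Type*} [Field K]
    (m : MonomialOrder (Fin n)) (I : Ideal (MvPolynomial (Fin n) K)) :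
    ∃ G : Finset (MvPolynomial (Fin n) K), JanetBasis m I G := by
  classical
  obtain ⟨B, hBL, hB⟩ := exists_finset_forall_exists_le (leadingMonomials m I)
  set D := B.sup id
  set U := (Finset.Iic D).filter (· ∈ leadingMonomials m I)
  have hUD : ∀ v ∈ U, v ≤ D := fun v hv => Finset.mem_Iic.1 (Finset.mem_filter.1 hv).1
  obtain ⟨G, hG0, hGI, hGU⟩ :=
    exists_finset_image_LM_eq m I U fun v hv => (Finset.mem_filter.1 hv).2
  refine ⟨G, hG0, hGI, fun f hfI hf0 => ?_⟩
  obtain ⟨b, hbB, hbf⟩ := hB _ ⟨f, hfI, hf0, rfl⟩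
  have hinf : LM m f ⊓ D ∈ U := Finset.mem_filter.2
    ⟨Finset.mem_Iic.2 inf_le_right, isUpperSet_leadingMonomials m I
      (le_inf hbf (Finset.le_sup (f := id) hbB)) (hBL hbB)⟩
  obtain ⟨g, hgG, hgLM⟩ := Finset.mem_image.1 (hGU ▸ hinf)
  exact ⟨g, hgG, hGU ▸ hgLM ▸ inf_mem_janetCone hUD (LM m f)⟩

theorem exists_janetBasis {n : ℕ} {K : Type*} [Field K]
    (m : MonomialOrder (Fin n)) (I : Ideal (MvPolynomial (Fin n) K)) (hI : I ≠ ⊥) :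
    ∃ G : Finset (MvPolynomial (Fin n) K), JanetBasis m I G :=
  exists_janetBasis_general m I
end

section
/- Uniqueness of the minimal involutive basis for Janet division: let ≺ be a monomial ordering on R = K[x₁,…,xₙ] and I ⊆ R a nonzero ideal. If G and G′ are two Janet bases of I that are both minimal (i.e., LM(G) ⊆ LM(G̃) and LM(G′) ⊆ LM(G̃) for every Janet basis G̃ of I), monic (every element has leading coefficient 1), and involutively autoreduced (for each g in the basis, no monomial occurring in g is Janet-divisible, w.r.t. the set LM of the remaining basis elements, by the leading monomial of one of the remaining basis elements), then G = G′. -/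
open scoped MonomialOrder

attribute [local instance] Classical.propDecidable

lemma toSyn_LM {n : ℕ} {K : Type*} [Field K] (m : MonomialOrder (Fin n))
    (f : MvPolynomial (Fin n) K) :
    m.toSyn (LM m f) = f.support.sup fun c => m.toSyn c := by
  simp [LM]

lemma LM_mem_support {n : ℕ} {K : Type*} [Field K] (m : MonomialOrder (Fin n))
    {f : MvPolynomial (Fin n) K} (hf : f ≠ 0) : LM m f ∈ f.support := by
  obtain ⟨c, hc, hceq⟩ := Finset.exists_mem_eq_sup f.support
    (MvPolynomial.support_nonempty.mpr hf) fun c => m.toSyn c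
  have : LM m f = c := by simp [LM, hceq]
  rwa [this]

lemma le_toSyn_LM {n : ℕ} {K : Type*} [Field K] (m : MonomialOrder (Fin n))
    {f : MvPolynomial (Fin n) K} {c : Fin n →₀ ℕ} (hc : c ∈ f.support) :
    m.toSyn c ≤ m.toSyn (LM m f) := by
  rw [toSyn_LM]; exact Finset.le_sup hc

lemma JanetCone_anti {n : ℕ} {U U' : Finset (Fin n →₀ ℕ)} (h : U ⊆ U') (u : Fin n →₀ ℕ) :
    JanetCone U' u ⊆ JanetCone U u := by
  rintro w ⟨h1, h2⟩
  exact ⟨h1, fun i hi v hv hpre => h2 i hi v (h hv) hpre⟩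

lemma janet_subset {n : ℕ} {K : Type*} [Field K]
    (m : MonomialOrder (Fin n)) (I : Ideal (MvPolynomial (Fin n) K))
    (G G' : Finset (MvPolynomial (Fin n) K))
    (hG : JanetBasis m I G) (hG' : JanetBasis m I G')
    (himg : G.image (LM m) = G'.image (LM m))
    (hGmonic : ∀ g ∈ G, MvPolynomial.coeff (LM m g) g = 1)
    (hG'monic : ∀ g ∈ G', MvPolynomial.coeff (LM m g) g = 1)
    (hGauto : ∀ g ∈ G, ∀ c ∈ g.support, ∀ g' ∈ G.erase g,
      c ∉ JanetCone ((G.erase g).image (LM m)) (LM m g'))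
    (hG'auto : ∀ g ∈ G', ∀ c ∈ g.support, ∀ g' ∈ G'.erase g,
      c ∉ JanetCone ((G'.erase g).image (LM m)) (LM m g')) :
    G ⊆ G' := by
  intro g hg
  -- find g' ∈ G' with the same leading monomial
  have hLMg : LM m g ∈ G'.image (LM m) := by
    rw [← himg]; exact Finset.mem_image_of_mem _ hg
  obtain ⟨g', hg', hLMg'⟩ := Finset.mem_image.mp hLMg
  -- we show g = g'
  suffices hgg' : g = g' by rwa [hgg']
  by_contra hne
  set f : MvPolynomial (Fin n) K := g - g' with hf_def
  have hf : f ≠ 0 := sub_ne_zero.mpr hne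
  have hfI : f ∈ I := I.sub_mem (hG.2.1 (Finset.mem_coe.mpr hg)) (hG'.2.1 (Finset.mem_coe.mpr hg'))
  have hsupp : f.support ⊆ g.support ∪ g'.support := by
    have := MvPolynomial.support_sub (Fin n) g g'
    exact this
  have hLMf_mem : LM m f ∈ f.support := LM_mem_support m hf
  -- the coefficient of f at LM m g vanishes
  have hcoeff : MvPolynomial.coeff (LM m g) f = 0 := by
    rw [hf_def, MvPolynomial.coeff_sub, hGmonic g hg]
    have h1 : MvPolynomial.coeff (LM m g) g' = 1 := by
      rw [← hLMg']; exact hG'monic g' hg'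
    rw [h1]; ring
  have hfne : LM m f ≠ LM m g := by
    intro h
    apply MvPolynomial.mem_support_iff.mp hLMf_mem
    rw [h]; exact hcoeff
  -- LM f is strictly smaller than LM g
  have hflt : m.toSyn (LM m f) < m.toSyn (LM m g) := by
    rcases Finset.mem_union.mp (hsupp hLMf_mem) with hmem | hmem
    · exact lt_of_le_of_ne (le_toSyn_LM m hmem) (fun h => hfne (m.toSyn.injective h))
    · have := le_toSyn_LM m hmem
      rw [hLMg'] at this
      exact lt_of_le_of_ne this (fun h => hfne (m.toSyn.injective h))
  -- get a Janet divisor of LM f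
  obtain ⟨g'', hg'', hcone⟩ := hG.2.2 f hfI hf
  by_cases hcase : LM m g'' = LM m g
  · -- then LM g ≤ LM f componentwise, contradicting hflt
    have : ∀ i, LM m g i ≤ LM m f i := by rw [← hcase]; exact hcone.1
    have hle : m.toSyn (LM m g) ≤ m.toSyn (LM m f) :=
      m.toSyn_monotone (Finsupp.le_def.mpr this)
    exact absurd hle (not_le.mpr hflt)
  · rcases Finset.mem_union.mp (hsupp hLMf_mem) with hmem | hmem
    · -- LM f ∈ support g : contradicts involutive autoreduction of G
      have hg''e : g'' ∈ G.erase g := by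
        refine Finset.mem_erase.mpr ⟨?_, hg''⟩
        intro h; exact hcase (by rw [h])
      refine hGauto g hg (LM m f) hmem g'' hg''e ?_
      exact JanetCone_anti (Finset.image_subset_image (Finset.erase_subset g G)) _ hcone
    · -- LM f ∈ support g' : contradicts involutive autoreduction of G'
      have hLMg'' : LM m g'' ∈ G'.image (LM m) := by
        rw [← himg]; exact Finset.mem_image_of_mem _ hg''
      obtain ⟨g₂, hg₂, hLMg₂⟩ := Finset.mem_image.mp hLMg''
      have hg₂e : g₂ ∈ G'.erase g' := by
        refine Finset.mem_erase.mpr ⟨?_, hg₂⟩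
        intro h
        exact hcase (by rw [← hLMg₂, h, hLMg'])
      refine hG'auto g' hg' (LM m f) hmem g₂ hg₂e ?_
      have hcone' : LM m f ∈ JanetCone (G'.image (LM m)) (LM m g₂) := by
        rw [hLMg₂, ← himg]; exact hcone
      exact JanetCone_anti (Finset.image_subset_image (Finset.erase_subset g' G')) _ hcone'


theorem minimal_janetBasis_unique {n : ℕ} {K : Type*} [Field K]
    (m : MonomialOrder (Fin n)) (I : Ideal (MvPolynomial (Fin n) K)) (hI : I ≠ ⊥)
    (G G' : Finset (MvPolynomial (Fin n) K))
    (hG : JanetBasis m I G) (hG' : JanetBasis m I G')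
    (hGmin : ∀ H : Finset (MvPolynomial (Fin n) K), JanetBasis m I H →
      G.image (LM m) ⊆ H.image (LM m))
    (hG'min : ∀ H : Finset (MvPolynomial (Fin n) K), JanetBasis m I H →
      G'.image (LM m) ⊆ H.image (LM m))
    (hGmonic : ∀ g ∈ G, MvPolynomial.coeff (LM m g) g = 1)
    (hG'monic : ∀ g ∈ G', MvPolynomial.coeff (LM m g) g = 1)
    (hGauto : ∀ g ∈ G, ∀ c ∈ g.support, ∀ g' ∈ G.erase g,
      c ∉ JanetCone ((G.erase g).image (LM m)) (LM m g'))
    (hG'auto : ∀ g ∈ G', ∀ c ∈ g.support, ∀ g' ∈ G'.erase g,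
      c ∉ JanetCone ((G'.erase g).image (LM m)) (LM m g')) :
    G = G' := by
  have himg : G.image (LM m) = G'.image (LM m) :=
    Finset.Subset.antisymm (hGmin G' hG') (hG'min G hG)
  exact Finset.Subset.antisymm
    (janet_subset m I G G' hG hG' himg hGmonic hG'monic hGauto hG'auto)
    (janet_subset m I G' G hG' hG himg.symm hG'monic hGmonic hG'auto hGauto)
end
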